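/- arXiv:1205.3982 — 5 statements merged into one kernel-verified Lean document; each statement's English description precedes it below -/
import Mathlib

section
/- Let n, m ≥ 1, let v_i(j) ≥ 0 be the value of item j to player i, and write v_k(s,t) = Σ_{j=s}^t v_k(j). Suppose u_1, …, u_n are nonnegative reals and x_i^j ∈ {0,1} are indicators satisfying: (i) Σ_{i=1}^n Σ_{j=1}^m x_i^j · v_i(j) ≤ 2 · Σ_{i=1}^n u_i; and (ii) for every player k and every segment 1 ≤ s ≤ t ≤ m, v_k(s,t) ≤ 2 · ( Σ_{j=1}^m x_k^j · v_k(j) + Σ_{j=s}^t Σ_{i≠k} x_i^j · v_i(j) ). Then for every family {(s_k, t_k)}_{k=1}^n of pairwise disjoint segments, Σ_{k=1}^n v_k(s_k, t_k) ≤ 8 · Σ_{i=1}^n u_i. (This inequality is the content of the proof that Algorithm 2 returns an 8-approximation of the discrete utilitarian welfare optimum.) -/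
/-!
Apply (ii) to each player's own segment and add up. The first part of the bound is
`2 Σ_k Σ_j x_k^j v_k(j)`. In the second part, the items that player `i` is assigned
inside the segments of the other players lie in pairwise disjoint segments, so they
are counted at most once and add up to at most `Σ_j x_i^j v_i(j)`. Hence the total is
at most `4 Σ_i Σ_j x_i^j v_i(j)`, which is at most `8 Σ_i u_i` by (i).
-/

open Finset Function

theorem Finset.sum_sum_le_sum_of_pairwiseDisjoint {ι α M : Type*} [DecidableEq α]
    [AddCommMonoid M] [PartialOrder M] [IsOrderedAddMonoid M]
    {K : Finset ι} {I : ι → Finset α} {S : Finset α} {f : α → M}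
    (hI : (K : Set ι).PairwiseDisjoint I) (hIS : ∀ k ∈ K, I k ⊆ S) (hf : ∀ j ∈ S, 0 ≤ f j) :
    ∑ k ∈ K, ∑ j ∈ I k, f j ≤ ∑ j ∈ S, f j := by
  rw [← sum_biUnion hI]
  exact sum_le_sum_of_subset_of_nonneg (biUnion_subset.2 hIS) fun j hj _ => hf j hj

theorem Finset.sum_sum_erase_comm {ι M : Type*} [Fintype ι] [DecidableEq ι] [AddCommMonoid M]
    (f : ι → ι → M) :
    ∑ k, ∑ i ∈ univ.erase k, f k i = ∑ i, ∑ k ∈ univ.erase i, f k i :=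
  sum_comm' fun _ _ => by simp [ne_comm]

theorem sum_sum_sum_erase_le_of_pairwiseDisjoint {ι α M : Type*} [Fintype ι] [DecidableEq ι]
    [DecidableEq α] [AddCommMonoid M] [PartialOrder M] [IsOrderedAddMonoid M]
    {I : ι → Finset α} {S : Finset α} {w : ι → α → M}
    (hI : Pairwise (Disjoint on I)) (hIS : ∀ k, I k ⊆ S) (hw : ∀ i, ∀ j ∈ S, 0 ≤ w i j) :
    ∑ k, ∑ j ∈ I k, ∑ i ∈ univ.erase k, w i j ≤ ∑ i, ∑ j ∈ S, w i j := by
  calc ∑ k, ∑ j ∈ I k, ∑ i ∈ univ.erase k, w i j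
      = ∑ i, ∑ k ∈ univ.erase i, ∑ j ∈ I k, w i j := by
        simp_rw [sum_comm (s := I _)]
        exact sum_sum_erase_comm fun k i => ∑ j ∈ I k, w i j
    _ ≤ ∑ i, ∑ j ∈ S, w i j :=
        sum_le_sum fun i _ => sum_sum_le_sum_of_pairwiseDisjoint
          (hI.set_pairwise _) (fun k _ => hIS k) (hw i)

theorem stmt_0_general (n m : ℕ)
    (v : Fin n → ℕ → ℝ) (hv : ∀ i j, 0 ≤ v i j)
    (u : Fin n → ℝ)
    (x : Fin n → ℕ → ℝ) (hx : ∀ i j, x i j = 0 ∨ x i j = 1)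
    (h1 : ∑ i, ∑ j ∈ Finset.Icc 1 m, x i j * v i j ≤ 2 * ∑ i, u i)
    (h2 : ∀ (k : Fin n) (s t : ℕ), 1 ≤ s → s ≤ t → t ≤ m →
      ∑ j ∈ Finset.Icc s t, v k j ≤
        2 * ((∑ j ∈ Finset.Icc 1 m, x k j * v k j) +
          ∑ j ∈ Finset.Icc s t, ∑ i ∈ Finset.univ.erase k, x i j * v i j))
    (s t : Fin n → ℕ)
    (hseg : ∀ k, 1 ≤ s k ∧ s k ≤ t k ∧ t k ≤ m)
    (hdisj : ∀ k k', k ≠ k' →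
      Disjoint (Finset.Icc (s k) (t k)) (Finset.Icc (s k') (t k'))) :
    ∑ k, ∑ j ∈ Finset.Icc (s k) (t k), v k j ≤ 8 * ∑ i, u i := by
  have hxv : ∀ i, ∀ j ∈ Icc 1 m, 0 ≤ x i j * v i j := fun i j _ => by
    rcases hx i j with h | h <;> simp [h, hv i j]
  have hcross := sum_sum_sum_erase_le_of_pairwiseDisjoint (w := fun i j => x i j * v i j) hdisj
    (fun k => Icc_subset_Icc (hseg k).1 (hseg k).2.2) hxv
  calc ∑ k, ∑ j ∈ Icc (s k) (t k), v k j
      ≤ ∑ k, 2 * ((∑ j ∈ Icc 1 m, x k j * v k j) +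
          ∑ j ∈ Icc (s k) (t k), ∑ i ∈ univ.erase k, x i j * v i j) :=
        sum_le_sum fun k _ => h2 k _ _ (hseg k).1 (hseg k).2.1 (hseg k).2.2
    _ = 2 * (∑ k, ∑ j ∈ Icc 1 m, x k j * v k j +
          ∑ k, ∑ j ∈ Icc (s k) (t k), ∑ i ∈ univ.erase k, x i j * v i j) := by
        rw [← mul_sum, sum_add_distrib]
    _ ≤ 2 * (2 * ∑ i, u i + 2 * ∑ i, u i) := by
        gcongr
        exact hcross.trans h1
    _ = 8 * ∑ i, u i := by ring

/-- the key inequality behind the 8-approximation for discrete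
utilitarian welfare (Algorithm 2). Items are `1, …, m`, players `Fin n`. -/
theorem stmt_0 (n m : ℕ) (hn : 1 ≤ n) (hm : 1 ≤ m)
    (v : Fin n → ℕ → ℝ) (hv : ∀ i j, 0 ≤ v i j)
    (u : Fin n → ℝ) (hu : ∀ i, 0 ≤ u i)
    (x : Fin n → ℕ → ℝ) (hx : ∀ i j, x i j = 0 ∨ x i j = 1)
    (h1 : ∑ i, ∑ j ∈ Finset.Icc 1 m, x i j * v i j ≤ 2 * ∑ i, u i)
    (h2 : ∀ (k : Fin n) (s t : ℕ), 1 ≤ s → s ≤ t → t ≤ m →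
      ∑ j ∈ Finset.Icc s t, v k j ≤
        2 * ((∑ j ∈ Finset.Icc 1 m, x k j * v k j) +
          ∑ j ∈ Finset.Icc s t, ∑ i ∈ Finset.univ.erase k, x i j * v i j))
    (s t : Fin n → ℕ)
    (hseg : ∀ k, 1 ≤ s k ∧ s k ≤ t k ∧ t k ≤ m)
    (hdisj : ∀ k k', k ≠ k' →
      Disjoint (Finset.Icc (s k) (t k)) (Finset.Icc (s k') (t k'))) :
    ∑ k, ∑ j ∈ Finset.Icc (s k) (t k), v k j ≤ 8 * ∑ i, u i :=
  stmt_0_general n m v hv u x hx h1 h2 s t hseg hdisj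
end

section
/- In the cake instance constructed from a 3-Dimensional Matching instance (X, Y, Z, E): if there exists E' ⊆ E with |E'| = n' such that every element of X ∪ Y ∪ Z is a coordinate of some triple in E', then there exists a connected division in which every player's utility is at least 1/M. (Completeness direction of the reduction proving that maximizing egalitarian welfare with connected pieces is NP-hard and hard to approximate within any factor smaller than 2.) -/
/-!
Let `E'` be the perfect matching and cut the cake into the sections `[2i, 2i + 2]`, one per
triple. The three separation players of `e_i` take the blocks `(2i + 1, 2i + 6/5)`,
`(2i + 7/5, 2i + 8/5)`, `(2i + 9/5, 2i + 2)` they value at `1`. The first half `[2i, 2i + 1]`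
goes to the triplet player of the `Z`-coordinate if `e_i ∈ E'`, who values it at
`2 · 1/(2M)`; otherwise its two halves go to a ground-set player of the `X`-coordinate and one of
the `Y`-coordinate, each valuing theirs at `1/M`. A perfect matching meets every `w` exactly once,
so `w` lies in exactly `m_w - 1` unmatched triples, and the `k`-th of them (from the left) serves
the `k`-th copy of `w`. The pieces go to distinct players and there are
`4n' + 5(M - n')` of them, which is the number of players, so everybody is served.
-/

open MeasureTheory Set
open scoped ENNReal

/-- The set of coordinates of a triple. -/
def coords {α : Type*} [DecidableEq α] (t : α × α × α) : Finset α :=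
  {t.1, t.2.1, t.2.2}

/-- `mult e w` is the number of triples in the list `e` having `w` as a
coordinate. -/
def mult {α : Type*} [DecidableEq α] {M : ℕ} (e : Fin M → α × α × α) (w : α) : ℕ :=
  (Finset.univ.filter fun i => w ∈ coords (e i)).card

/-- Density of a uniform block: total value `c` spread uniformly over the
interval `(a, b)`. -/
noncomputable def unif (a b c : ℝ) : ℝ → ℝ≥0∞ :=
  (Ioo a b).indicator fun _ => ENNReal.ofReal (c / (b - a))

/-- The compensation-range density common to all non-separation players: total
value `(M - mw)/(2M²)` on each of the intervals `(2j+6/5, 2j+7/5)` and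
`(2j+8/5, 2j+9/5)` of the `j`-th section (sections indexed from 0). -/
noncomputable def compDensity (M : ℕ) (mw : ℕ) : ℝ → ℝ≥0∞ := fun t =>
  ∑ j : Fin M,
    (unif (2 * (j : ℝ) + 6 / 5) (2 * (j : ℝ) + 7 / 5)
        (((M : ℝ) - mw) / (2 * (M : ℝ) ^ 2)) t +
      unif (2 * (j : ℝ) + 8 / 5) (2 * (j : ℝ) + 9 / 5)
        (((M : ℝ) - mw) / (2 * (M : ℝ) ^ 2)) t)

/-- The players of the instance built from a 3DM instance: one triplet player
per `z ∈ Z`, `m_x - 1` ground-set players per `x ∈ X`, `m_y - 1` ground-set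
players per `y ∈ Y`, and three separation players per triple. -/
abbrev DMPlayer {α : Type*} [DecidableEq α] (X Y Z : Finset α) {M : ℕ}
    (e : Fin M → α × α × α) : Type _ :=
  {z // z ∈ Z} ⊕ ((Σ x : {x // x ∈ X}, Fin (mult e x.1 - 1)) ⊕
    ((Σ y : {y // y ∈ Y}, Fin (mult e y.1 - 1)) ⊕ (Fin M × Fin 3)))

/-- The value density function of each player in the reduction. -/
noncomputable def dmDensity {α : Type*} [DecidableEq α] (X Y Z : Finset α)
    {M : ℕ} (e : Fin M → α × α × α) : DMPlayer X Y Z e → ℝ → ℝ≥0∞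
  | Sum.inl z => fun t =>
      (∑ i : Fin M,
        if z.1 ∈ coords (e i) then
          unif (2 * (i : ℝ)) (2 * (i : ℝ) + 1 / 4) (1 / (2 * (M : ℝ))) t +
            unif (2 * (i : ℝ) + 3 / 4) (2 * (i : ℝ) + 1) (1 / (2 * (M : ℝ))) t
        else 0) + compDensity M (mult e z.1) t
  | Sum.inr (Sum.inl ⟨x, _⟩) => fun t =>
      (∑ i : Fin M,
        if x.1 ∈ coords (e i) then
          unif (2 * (i : ℝ) + 1 / 4) (2 * (i : ℝ) + 1 / 2) (1 / (M : ℝ)) t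
        else 0) + compDensity M (mult e x.1) t
  | Sum.inr (Sum.inr (Sum.inl ⟨y, _⟩)) => fun t =>
      (∑ i : Fin M,
        if y.1 ∈ coords (e i) then
          unif (2 * (i : ℝ) + 1 / 2) (2 * (i : ℝ) + 3 / 4) (1 / (M : ℝ)) t
        else 0) + compDensity M (mult e y.1) t
  | Sum.inr (Sum.inr (Sum.inr (i, k))) => fun t =>
      if k = 0 then unif (2 * (i : ℝ) + 1) (2 * (i : ℝ) + 6 / 5) 1 t
      else if k = 1 then unif (2 * (i : ℝ) + 7 / 5) (2 * (i : ℝ) + 8 / 5) 1 t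
      else unif (2 * (i : ℝ) + 9 / 5) (2 * (i : ℝ) + 2) 1 t

/-- The valuation measure of each player in the reduction. -/
noncomputable def dmMeas {α : Type*} [DecidableEq α] (X Y Z : Finset α)
    {M : ℕ} (e : Fin M → α × α × α) (p : DMPlayer X Y Z e) : Measure ℝ :=
  MeasureTheory.volume.withDensity (dmDensity X Y Z e p)

/-- Each entry `(p, l, r)` of `L` gives player `p` the interval `(l, r)`, and these intervals are
consecutive from `a` to `b`. -/
def Tiles {P : Type*} (L : List (P × ℝ × ℝ)) (a b : ℝ) : Prop :=
  L.map (·.2.1) ++ [b] = a :: L.map (·.2.2)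

namespace Tiles

variable {P : Type*}

theorem append {L₁ L₂ : List (P × ℝ × ℝ)} {a b c : ℝ} (h₁ : Tiles L₁ a b) (h₂ : Tiles L₂ b c) :
    Tiles (L₁ ++ L₂) a c := by
  unfold Tiles at *
  rw [List.map_append, List.append_assoc, h₂, ← List.singleton_append, ← List.append_assoc, h₁,
    List.map_append, List.cons_append]

theorem flatten_ofFn {n : ℕ} (f : Fin n → List (P × ℝ × ℝ)) (g : ℕ → ℝ)
    (h : ∀ i : Fin n, Tiles (f i) (g i) (g (i + 1))) : Tiles (List.ofFn f).flatten (g 0) (g n) := by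
  induction n generalizing g with
  | zero => rfl
  | succ n ih =>
    rw [List.ofFn_succ, List.flatten_cons]
    exact (h 0).append (ih (fun i => f i.succ) (fun k => g (k + 1)) fun i => h i.succ)

theorem getElem_cons_eq_left {L : List (P × ℝ × ℝ)} {a b : ℝ} (h : Tiles L a b) (k : ℕ)
    (hk : k < L.length) :
    (a :: L.map (·.2.2))[k]'(by simp; omega) = L[k].2.1 := by
  rw [List.getElem_of_eq h.symm, List.getElem_append_left (by simpa using hk), List.getElem_map]

theorem getElem_cons_length {L : List (P × ℝ × ℝ)} {a b : ℝ} (h : Tiles L a b) :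
    (a :: L.map (·.2.2))[L.length]'(by simp) = b := by
  rw [List.getElem_of_eq h.symm, List.getElem_append_right (by simp)]
  simp

end Tiles

theorem exists_division_of_tiles {P : Type*} [Fintype P] {L : List (P × ℝ × ℝ)} {a b : ℝ}
    (ht : Tiles L a b) (hle : ∀ q ∈ L, q.2.1 ≤ q.2.2) (hnd : (L.map Prod.fst).Nodup)
    (hlen : L.length = Fintype.card P) :
    ∃ (c : Fin (Fintype.card P + 1) → ℝ) (σ : Fin (Fintype.card P) ≃ P),
      Monotone c ∧ c 0 = a ∧ c (Fin.last _) = b ∧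
      ∀ p, ∃ q ∈ L, q.1 = p ∧ c (σ.symm p).castSucc = q.2.1 ∧ c (σ.symm p).succ = q.2.2 := by
  let c : Fin (Fintype.card P + 1) → ℝ := fun k => (a :: L.map (·.2.2))[k.1]'(by simp; omega)
  have hc_castSucc (k : Fin (Fintype.card P)) : c k.castSucc = L[k.1].2.1 :=
    ht.getElem_cons_eq_left k (by omega)
  have hc_succ (k : Fin (Fintype.card P)) : c k.succ = L[k.1].2.2 := by
    simp [c]
  have hinj : Function.Injective fun k : Fin (Fintype.card P) => L[k.1].1 := by
    intro i j hij
    have := List.nodup_iff_injective_get.1 hnd (a₁ := ⟨i, by simp; omega⟩)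
      (a₂ := ⟨j, by simp; omega⟩) (by simpa using hij)
    exact Fin.ext (by simpa using this)
  let σ := Equiv.ofBijective _ ((Fintype.bijective_iff_injective_and_card _).2 ⟨hinj, by simp⟩)
  refine ⟨c, σ, Fin.monotone_iff_le_succ.2 fun k => ?_, rfl, ?_, fun p => ?_⟩
  · rw [hc_castSucc, hc_succ]
    exact hle _ (List.getElem_mem _)
  · simp only [c, Fin.val_last, ← hlen]
    exact ht.getElem_cons_length
  · refine ⟨L[(σ.symm p).1], List.getElem_mem _, σ.apply_symm_apply p, hc_castSucc _, hc_succ _⟩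

theorem setLIntegral_unif {a b a' b' v : ℝ} (h₁ : a ≤ a') (h₂ : a' < b') (h₃ : b' ≤ b)
    (hv : 0 ≤ v) : ∫⁻ t in Ioo a b, unif a' b' v t = ENNReal.ofReal v := by
  have hlen : (0 : ℝ) < b' - a' := by linarith
  rw [unif, lintegral_indicator measurableSet_Ioo, setLIntegral_const,
    Measure.restrict_apply measurableSet_Ioo,
    inter_eq_self_of_subset_left (Ioo_subset_Ioo h₁ h₃), Real.volume_Ioo,
    ← ENNReal.ofReal_mul (div_nonneg hv hlen.le), div_mul_cancel₀ _ hlen.ne']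

theorem measurable_unif (a b v : ℝ) : Measurable (unif a b v) :=
  measurable_const.indicator measurableSet_Ioo

theorem ofReal_le_withDensity_Ioo {f : ℝ → ℝ≥0∞} {a b a' b' v : ℝ} (h₁ : a ≤ a') (h₂ : a' < b')
    (h₃ : b' ≤ b) (hv : 0 ≤ v) (hf : unif a' b' v ≤ f) :
    ENNReal.ofReal v ≤ volume.withDensity f (Ioo a b) := by
  rw [withDensity_apply _ measurableSet_Ioo, ← setLIntegral_unif h₁ h₂ h₃ hv]
  exact lintegral_mono hf

theorem ofReal_add_ofReal_le_withDensity_Ioo {f : ℝ → ℝ≥0∞} {a b a₁ b₁ a₂ b₂ v : ℝ}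
    (h₁ : a ≤ a₁) (h₂ : a₁ < b₁) (h₃ : b₁ ≤ b) (h₄ : a ≤ a₂) (h₅ : a₂ < b₂) (h₆ : b₂ ≤ b)
    (hv : 0 ≤ v) (hf : unif a₁ b₁ v + unif a₂ b₂ v ≤ f) :
    ENNReal.ofReal v + ENNReal.ofReal v ≤ volume.withDensity f (Ioo a b) := by
  rw [withDensity_apply _ measurableSet_Ioo]
  calc ENNReal.ofReal v + ENNReal.ofReal v
      = ∫⁻ t in Ioo a b, unif a₁ b₁ v t + unif a₂ b₂ v t := by
        rw [lintegral_add_left (measurable_unif a₁ b₁ v),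
          setLIntegral_unif h₁ h₂ h₃ hv, setLIntegral_unif h₄ h₅ h₆ hv]
    _ ≤ ∫⁻ t in Ioo a b, f t := lintegral_mono hf

theorem le_sum_ite_add {ι : Type*} [Fintype ι] {p : ι → Prop} [DecidablePred p] {g : ι → ℝ≥0∞}
    {i : ι} (hi : p i) (c : ℝ≥0∞) : g i ≤ (∑ j, if p j then g j else 0) + c := by
  refine le_add_right (le_trans ?_ (Finset.single_le_sum (fun _ _ => zero_le) (Finset.mem_univ i)))
  rw [if_pos hi]

section Reduction

open scoped Finset

variable {α : Type*} [DecidableEq α] {X Y Z : Finset α} {M : ℕ} {e : Fin M → α × α × α}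

theorem inv_natCast_eq_ofReal {n : ℕ} (hn : 0 < n) : (n : ℝ≥0∞)⁻¹ = ENNReal.ofReal (1 / n) := by
  rw [one_div, ENNReal.ofReal_inv_of_pos (by exact_mod_cast hn), ENNReal.ofReal_natCast]

theorem inv_le_dmMeas_triplet {z : Z} {i : Fin M} (hz : z.1 ∈ coords (e i)) :
    (M : ℝ≥0∞)⁻¹ ≤ dmMeas X Y Z e (Sum.inl z) (Ioo (2 * (i : ℝ)) (2 * i + 1)) := by
  have hM : (0 : ℝ) < M := by exact_mod_cast i.pos
  have hhalf : (M : ℝ≥0∞)⁻¹ = ENNReal.ofReal (1 / (2 * M)) + ENNReal.ofReal (1 / (2 * M)) := by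
    rw [inv_natCast_eq_ofReal i.pos, ← ENNReal.ofReal_add (by positivity) (by positivity)]
    congr 1
    field_simp
    ring
  rw [hhalf, dmMeas]
  refine ofReal_add_ofReal_le_withDensity_Ioo (a₁ := 2 * i) (b₁ := 2 * i + 1 / 4)
    (a₂ := 2 * i + 3 / 4) (b₂ := 2 * i + 1) le_rfl (by linarith) (by linarith) (by linarith)
    (by linarith) le_rfl (by positivity) fun t => ?_
  simp only [dmDensity]
  exact le_sum_ite_add (i := i) hz _

theorem inv_le_dmMeas_groundX {x : X} (r : Fin (mult e x.1 - 1)) {i : Fin M}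
    (hx : x.1 ∈ coords (e i)) :
    (M : ℝ≥0∞)⁻¹ ≤
      dmMeas X Y Z e (Sum.inr (Sum.inl ⟨x, r⟩)) (Ioo (2 * (i : ℝ)) (2 * i + 1 / 2)) := by
  rw [inv_natCast_eq_ofReal i.pos, dmMeas]
  refine ofReal_le_withDensity_Ioo (a' := 2 * i + 1 / 4) (b' := 2 * i + 1 / 2) (by linarith)
    (by linarith) le_rfl (by positivity) fun t => ?_
  simp only [dmDensity]
  exact le_sum_ite_add (i := i) hx _

theorem inv_le_dmMeas_groundY {y : Y} (r : Fin (mult e y.1 - 1)) {i : Fin M}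
    (hy : y.1 ∈ coords (e i)) :
    (M : ℝ≥0∞)⁻¹ ≤
      dmMeas X Y Z e (Sum.inr (Sum.inr (Sum.inl ⟨y, r⟩)))
        (Ioo (2 * (i : ℝ) + 1 / 2) (2 * i + 1)) := by
  rw [inv_natCast_eq_ofReal i.pos, dmMeas]
  refine ofReal_le_withDensity_Ioo (a' := 2 * i + 1 / 2) (b' := 2 * i + 3 / 4) le_rfl
    (by linarith) (by linarith) (by positivity) fun t => ?_
  simp only [dmDensity]
  exact le_sum_ite_add (i := i) hy _

theorem inv_le_dmMeas_separation {i : Fin M} {k : Fin 3} {a b a' b' : ℝ} (h₁ : a ≤ a')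
    (h₂ : a' < b') (h₃ : b' ≤ b)
    (hk : dmDensity X Y Z e (Sum.inr (Sum.inr (Sum.inr (i, k)))) = unif a' b' 1) :
    (M : ℝ≥0∞)⁻¹ ≤ dmMeas X Y Z e (Sum.inr (Sum.inr (Sum.inr (i, k)))) (Ioo a b) := by
  have hM : (M : ℝ≥0∞)⁻¹ ≤ ENNReal.ofReal 1 := by
    rw [ENNReal.ofReal_one, ENNReal.inv_le_one]
    exact Nat.one_le_cast.2 i.pos
  exact hM.trans (ofReal_le_withDensity_Ioo h₁ h₂ h₃ zero_le_one hk.ge)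

theorem fst_mem_coords (t : α × α × α) : t.1 ∈ coords t := by simp [coords]

theorem snd_fst_mem_coords (t : α × α × α) : t.2.1 ∈ coords t := by simp [coords]

theorem snd_snd_mem_coords (t : α × α × α) : t.2.2 ∈ coords t := by simp [coords]

theorem mem_coords_iff_fst_eq {t : α × α × α} {w : α} (hXY : Disjoint X Y) (hXZ : Disjoint X Z)
    (htY : t.2.1 ∈ Y) (htZ : t.2.2 ∈ Z) (hw : w ∈ X) : w ∈ coords t ↔ t.1 = w := by
  refine ⟨fun h => ?_, fun h => h ▸ fst_mem_coords t⟩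
  simp only [coords, Finset.mem_insert, Finset.mem_singleton] at h
  rcases h with h | rfl | rfl
  · exact h.symm
  · exact absurd htY (Finset.disjoint_left.1 hXY hw)
  · exact absurd htZ (Finset.disjoint_left.1 hXZ hw)

theorem mem_coords_iff_snd_fst_eq {t : α × α × α} {w : α} (hXY : Disjoint X Y)
    (hYZ : Disjoint Y Z) (htX : t.1 ∈ X) (htZ : t.2.2 ∈ Z) (hw : w ∈ Y) :
    w ∈ coords t ↔ t.2.1 = w := by
  refine ⟨fun h => ?_, fun h => h ▸ snd_fst_mem_coords t⟩
  simp only [coords, Finset.mem_insert, Finset.mem_singleton] at h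
  rcases h with rfl | h | rfl
  · exact absurd htX (Finset.disjoint_right.1 hXY hw)
  · exact h.symm
  · exact absurd htZ (Finset.disjoint_left.1 hYZ hw)

theorem snd_snd_eq_of_mem_coords {t : α × α × α} {w : α} (hXZ : Disjoint X Z)
    (hYZ : Disjoint Y Z) (htX : t.1 ∈ X) (htY : t.2.1 ∈ Y) (hw : w ∈ Z) (h : w ∈ coords t) :
    t.2.2 = w := by
  simp only [coords, Finset.mem_insert, Finset.mem_singleton] at h
  rcases h with rfl | rfl | h
  · exact absurd htX (Finset.disjoint_right.1 hXZ hw)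
  · exact absurd htY (Finset.disjoint_right.1 hYZ hw)
  · exact h.symm

theorem sum_mult_sub_one_add_card {W : Finset α} {f : Fin M → α} (hf : ∀ i, f i ∈ W)
    (hcoords : ∀ w ∈ W, ∀ i, w ∈ coords (e i) ↔ f i = w) (hpos : ∀ w ∈ W, 1 ≤ mult e w) :
    ∑ w ∈ W, (mult e w - 1) + #W = M := by
  have hmult : ∀ w ∈ W, mult e w = #{i | f i = w} := fun w hw => by
    simp only [mult, hcoords w hw]
  calc ∑ w ∈ W, (mult e w - 1) + #W = ∑ w ∈ W, mult e w := by
        rw [Finset.card_eq_sum_ones, ← Finset.sum_add_distrib]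
        exact Finset.sum_congr rfl fun w hw => Nat.sub_add_cancel (hpos w hw)
    _ = #(Finset.univ : Finset (Fin M)) := by
        rw [Finset.sum_congr rfl hmult, Finset.card_eq_sum_card_fiberwise fun i _ => hf i]
    _ = M := Finset.card_fin M

theorem card_dmPlayer (e : Fin M → α × α × α) :
    Fintype.card (DMPlayer X Y Z e) =
      #Z + (∑ x ∈ X, (mult e x - 1) + (∑ y ∈ Y, (mult e y - 1) + M * 3)) := by
  simp only [DMPlayer, Fintype.card_sum, Fintype.card_sigma, Fintype.card_prod, Fintype.card_fin,
    Fintype.card_coe]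
  rw [Finset.sum_coe_sort X fun x => mult e x - 1, Finset.sum_coe_sort Y fun y => mult e y - 1]

theorem card_dmPlayer_add_card_add_card (hXY : Disjoint X Y) (hXZ : Disjoint X Z)
    (hYZ : Disjoint Y Z) (heX : ∀ i, (e i).1 ∈ X) (heY : ∀ i, (e i).2.1 ∈ Y)
    (heZ : ∀ i, (e i).2.2 ∈ Z) (hmult : ∀ w ∈ X ∪ Y ∪ Z, 1 ≤ mult e w) :
    Fintype.card (DMPlayer X Y Z e) + #X + #Y = #Z + 5 * M := by
  have hsumX := sum_mult_sub_one_add_card heX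
    (fun x hx i => mem_coords_iff_fst_eq hXY hXZ (heY i) (heZ i) hx)
    fun x hx => hmult x (by simp [hx])
  have hsumY := sum_mult_sub_one_add_card heY
    (fun y hy i => mem_coords_iff_snd_fst_eq hXY hYZ (heX i) (heZ i) hy)
    fun y hy => hmult y (by simp [hy])
  rw [card_dmPlayer]
  omega

def unmatchedRank (e : Fin M → α × α × α) (E' : Finset (Fin M)) (w : α) (i : Fin M) : ℕ :=
  #{j | j < i ∧ j ∉ E' ∧ w ∈ coords (e j)}

theorem unmatchedRank_lt_mult_sub_one {E' : Finset (Fin M)} {w : α} {i : Fin M}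
    (hi : i ∉ E') (hwi : w ∈ coords (e i)) (hcov : ∃ i' ∈ E', w ∈ coords (e i')) :
    unmatchedRank e E' w i < mult e w - 1 := by
  obtain ⟨i', hi', hwi'⟩ := hcov
  have hne : i ≠ i' := fun h => hi (h ▸ hi')
  have hsub : insert i (insert i' ({j | j < i ∧ j ∉ E' ∧ w ∈ coords (e j)} : Finset (Fin M))) ⊆
      ({j | w ∈ coords (e j)} : Finset (Fin M)) := by
    intro j hj
    simp only [Finset.mem_insert, Finset.mem_filter, Finset.mem_univ, true_and] at hj ⊢
    rcases hj with rfl | rfl | ⟨-, -, hj⟩ <;> assumption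
  have := Finset.card_le_card hsub
  rw [Finset.card_insert_of_notMem (by simp [hne]),
    Finset.card_insert_of_notMem (by simp [hi'])] at this
  exact Nat.lt_sub_of_add_lt this

theorem unmatchedRank_lt_of_lt {E' : Finset (Fin M)} {w : α} {i j : Fin M} (hij : i < j)
    (hi : i ∉ E') (hwi : w ∈ coords (e i)) : unmatchedRank e E' w i < unmatchedRank e E' w j := by
  refine Finset.card_lt_card (Finset.ssubset_iff_of_subset ?_ |>.2 ⟨i, ?_, ?_⟩)
  · intro k hk
    simp only [Finset.mem_filter, Finset.mem_univ, true_and] at hk ⊢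
    exact ⟨hk.1.trans hij, hk.2⟩
  · simp [hij, hi, hwi]
  · simp

theorem eq_of_unmatchedRank_eq {E' : Finset (Fin M)} {w : α} {i j : Fin M} (hi : i ∉ E')
    (hj : j ∉ E') (hwi : w ∈ coords (e i)) (hwj : w ∈ coords (e j))
    (h : unmatchedRank e E' w i = unmatchedRank e E' w j) : i = j := by
  rcases lt_trichotomy i j with hij | hij | hij
  · exact absurd h (unmatchedRank_lt_of_lt hij hi hwi).ne
  · exact hij
  · exact absurd h (unmatchedRank_lt_of_lt hij hj hwj).ne'

theorem injOn_snd_snd_of_covers (hXZ : Disjoint X Z) (hYZ : Disjoint Y Z)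
    (heX : ∀ i, (e i).1 ∈ X) (heY : ∀ i, (e i).2.1 ∈ Y) {E' : Finset (Fin M)}
    (hcov : ∀ z ∈ Z, ∃ i ∈ E', z ∈ coords (e i)) (hcard : #E' = #Z) :
    Set.InjOn (fun i => (e i).2.2) E' := by
  refine Finset.injOn_of_card_image_eq (le_antisymm Finset.card_image_le ?_)
  calc #E' = #Z := hcard
    _ ≤ #(E'.image fun i => (e i).2.2) := Finset.card_le_card fun z hz => by
        obtain ⟨i, hi, hzi⟩ := hcov z hz
        exact Finset.mem_image.2 ⟨i, hi, snd_snd_eq_of_mem_coords hXZ hYZ (heX i) (heY i) hz hzi⟩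

variable (heX : ∀ i, (e i).1 ∈ X) (heY : ∀ i, (e i).2.1 ∈ Y) (heZ : ∀ i, (e i).2.2 ∈ Z)
  {E' : Finset (Fin M)} (hcov : ∀ w ∈ X ∪ Y ∪ Z, ∃ i ∈ E', w ∈ coords (e i))

/-- The pieces of the section `[2i, 2i + 2]`. Its first half is taken by the triplet player of
`e i` if `i ∈ E'`, and otherwise shared by the next unused ground-set players of `(e i).1` and
`(e i).2.1`; the three separation players of `i` take the second half. -/
noncomputable def sectionPieces (i : Fin M) : List (DMPlayer X Y Z e × ℝ × ℝ) :=
  (if hi : i ∈ E' then [(Sum.inl ⟨(e i).2.2, heZ i⟩, 2 * (i : ℝ), 2 * (i : ℝ) + 1)]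
  else
    [(Sum.inr (Sum.inl ⟨⟨(e i).1, heX i⟩, ⟨unmatchedRank e E' (e i).1 i,
        unmatchedRank_lt_mult_sub_one hi (fst_mem_coords _) (hcov _ (by simp [heX i]))⟩⟩),
        2 * (i : ℝ), 2 * (i : ℝ) + 1 / 2),
      (Sum.inr (Sum.inr (Sum.inl ⟨⟨(e i).2.1, heY i⟩, ⟨unmatchedRank e E' (e i).2.1 i,
        unmatchedRank_lt_mult_sub_one hi (snd_fst_mem_coords _) (hcov _ (by simp [heY i]))⟩⟩)),
        2 * (i : ℝ) + 1 / 2, 2 * (i : ℝ) + 1)]) ++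
  [(Sum.inr (Sum.inr (Sum.inr (i, 0))), 2 * (i : ℝ) + 1, 2 * (i : ℝ) + 6 / 5),
    (Sum.inr (Sum.inr (Sum.inr (i, 1))), 2 * (i : ℝ) + 6 / 5, 2 * (i : ℝ) + 8 / 5),
    (Sum.inr (Sum.inr (Sum.inr (i, 2))), 2 * (i : ℝ) + 8 / 5, 2 * (i : ℝ) + 2)]

theorem tiles_sectionPieces (i : Fin M) :
    Tiles (sectionPieces heX heY heZ hcov i) (2 * (i : ℝ)) (2 * (i : ℝ) + 2) := by
  unfold sectionPieces Tiles
  split_ifs <;> simp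

theorem length_sectionPieces (i : Fin M) :
    (sectionPieces heX heY heZ hcov i).length = 3 + if i ∈ E' then 1 else 2 := by
  unfold sectionPieces
  split_ifs <;> rfl

theorem inv_le_dmMeas_of_mem_sectionPieces {i : Fin M} {q : DMPlayer X Y Z e × ℝ × ℝ}
    (hq : q ∈ sectionPieces heX heY heZ hcov i) :
    (M : ℝ≥0∞)⁻¹ ≤ dmMeas X Y Z e q.1 (Ioo q.2.1 q.2.2) := by
  unfold sectionPieces at hq
  rcases List.mem_append.1 hq with hq | hq
  · split_ifs at hq <;> simp only [List.mem_cons, List.not_mem_nil, or_false] at hq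
    · exact hq ▸ inv_le_dmMeas_triplet (snd_snd_mem_coords _)
    · rcases hq with rfl | rfl
      · exact inv_le_dmMeas_groundX _ (fst_mem_coords _)
      · exact inv_le_dmMeas_groundY _ (snd_fst_mem_coords _)
  · simp only [List.mem_cons, List.not_mem_nil, or_false] at hq
    rcases hq with rfl | rfl | rfl
    · exact inv_le_dmMeas_separation le_rfl (by linarith) le_rfl rfl
    · exact inv_le_dmMeas_separation (by linarith) (by linarith) le_rfl rfl
    · exact inv_le_dmMeas_separation (by linarith) (by linarith) le_rfl rfl

theorem le_of_mem_sectionPieces (i : Fin M) :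
    ∀ q ∈ sectionPieces heX heY heZ hcov i, q.2.1 ≤ q.2.2 := by
  unfold sectionPieces
  split_ifs <;> simp <;> norm_num

variable (E') in
/-- The section in which `sectionPieces` serves each player. -/
def ServedIn : DMPlayer X Y Z e → Fin M → Prop
  | Sum.inl z, i => i ∈ E' ∧ (e i).2.2 = z.1
  | Sum.inr (Sum.inl ⟨x, r⟩), i => i ∉ E' ∧ (e i).1 = x.1 ∧ unmatchedRank e E' x.1 i = r
  | Sum.inr (Sum.inr (Sum.inl ⟨y, r⟩)), i => i ∉ E' ∧ (e i).2.1 = y.1 ∧ unmatchedRank e E' y.1 i = r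
  | Sum.inr (Sum.inr (Sum.inr (j, _))), i => j = i

theorem servedIn_of_mem_sectionPieces {i : Fin M} {p : DMPlayer X Y Z e}
    (hp : p ∈ (sectionPieces heX heY heZ hcov i).map Prod.fst) : ServedIn E' p i := by
  by_cases hi : i ∈ E'
  · simp only [sectionPieces, hi, dite_true, List.cons_append, List.nil_append, List.map_cons,
      List.map_nil, List.mem_cons, List.not_mem_nil, or_false] at hp
    rcases hp with rfl | rfl | rfl | rfl <;> simp [ServedIn, hi]
  · simp only [sectionPieces, hi, dite_false, List.cons_append, List.nil_append, List.map_cons,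
      List.map_nil, List.mem_cons, List.not_mem_nil, or_false] at hp
    rcases hp with rfl | rfl | rfl | rfl | rfl <;> simp [ServedIn, hi]

theorem ServedIn.unique (hZ : Set.InjOn (fun i => (e i).2.2) E') {p : DMPlayer X Y Z e}
    {i j : Fin M} (hi : ServedIn E' p i) (hj : ServedIn E' p j) : i = j := by
  rcases p with z | ⟨x, r⟩ | ⟨y, r⟩ | ⟨k, l⟩
  · exact hZ hi.1 hj.1 (hi.2.trans hj.2.symm)
  · obtain ⟨hiE, hix, hir⟩ := hi
    obtain ⟨hjE, hjx, hjr⟩ := hj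
    exact eq_of_unmatchedRank_eq hiE hjE (hix ▸ fst_mem_coords _) (hjx ▸ fst_mem_coords _)
      (hir.trans hjr.symm)
  · obtain ⟨hiE, hiy, hir⟩ := hi
    obtain ⟨hjE, hjy, hjr⟩ := hj
    exact eq_of_unmatchedRank_eq hiE hjE (hiy ▸ snd_fst_mem_coords _) (hjy ▸ snd_fst_mem_coords _)
      (hir.trans hjr.symm)
  · exact hi.symm.trans hj

theorem nodup_sectionPieces (i : Fin M) :
    ((sectionPieces heX heY heZ hcov i).map Prod.fst).Nodup := by
  unfold sectionPieces
  split_ifs <;> simp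

theorem nodup_flatten_sectionPieces (hZ : Set.InjOn (fun i => (e i).2.2) E') :
    ((List.ofFn (sectionPieces heX heY heZ hcov)).flatten.map Prod.fst).Nodup := by
  rw [List.map_flatten, List.map_ofFn, List.nodup_flatten]
  refine ⟨fun l hl => ?_, List.pairwise_ofFn.2 fun i j hij => ?_⟩
  · obtain ⟨i, rfl⟩ := List.mem_ofFn.1 hl
    exact nodup_sectionPieces heX heY heZ hcov i
  · exact List.disjoint_left.2 fun p hpi hpj => hij.ne <|
      (servedIn_of_mem_sectionPieces heX heY heZ hcov hpi).unique hZ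
        (servedIn_of_mem_sectionPieces heX heY heZ hcov hpj)

theorem length_flatten_sectionPieces :
    (List.ofFn (sectionPieces heX heY heZ hcov)).flatten.length =
      #E' + (2 * (M - #E') + 3 * M) := by
  simp only [List.length_flatten, List.map_ofFn, List.sum_ofFn, Function.comp_apply,
    length_sectionPieces, Finset.sum_add_distrib, Finset.sum_ite, Finset.sum_const, smul_eq_mul,
    Finset.filter_mem_eq_inter, Finset.univ_inter, Finset.filter_not, Finset.card_univ_sdiff,
    Finset.card_univ, Fintype.card_fin]
  ring

end Reduction

theorem stmt_1_general {α : Type*} [DecidableEq α] (X Y Z : Finset α) (n' M : ℕ)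
    (hX : X.card = n') (hY : Y.card = n') (hZ : Z.card = n')
    (hXY : Disjoint X Y) (hXZ : Disjoint X Z) (hYZ : Disjoint Y Z)
    (e : Fin M → α × α × α)
    (heX : ∀ i, (e i).1 ∈ X) (heY : ∀ i, (e i).2.1 ∈ Y) (heZ : ∀ i, (e i).2.2 ∈ Z)
    (hmult : ∀ w ∈ X ∪ Y ∪ Z, 1 ≤ mult e w)
    (hcover : ∃ E' : Finset (Fin M), E'.card = n' ∧
      ∀ w ∈ X ∪ Y ∪ Z, ∃ i ∈ E', w ∈ coords (e i)) :
    ∃ (c : Fin (Fintype.card (DMPlayer X Y Z e) + 1) → ℝ)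
      (σ : Fin (Fintype.card (DMPlayer X Y Z e)) ≃ DMPlayer X Y Z e),
      Monotone c ∧ c 0 = 0 ∧ c (Fin.last _) = 2 * M ∧
      ∀ p : DMPlayer X Y Z e,
        ((M : ℝ≥0∞))⁻¹ ≤
          dmMeas X Y Z e p (Ioo (c (σ.symm p).castSucc) (c (σ.symm p).succ)) := by
  obtain ⟨E', hE', hcov⟩ := hcover
  set L := (List.ofFn (sectionPieces heX heY heZ hcov)).flatten
  have htiles : Tiles L 0 (2 * M) := by
    simpa using Tiles.flatten_ofFn _ (fun k => 2 * (k : ℝ)) fun i => by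
      simpa [mul_add] using tiles_sectionPieces heX heY heZ hcov i
  have hle : ∀ q ∈ L, q.2.1 ≤ q.2.2 := by
    simp only [L, List.forall_mem_flatten, List.forall_mem_ofFn_iff]
    exact le_of_mem_sectionPieces heX heY heZ hcov
  have hfair : ∀ q ∈ L, (M : ℝ≥0∞)⁻¹ ≤ dmMeas X Y Z e q.1 (Ioo q.2.1 q.2.2) := by
    simp only [L, List.forall_mem_flatten, List.forall_mem_ofFn_iff]
    exact fun i q => inv_le_dmMeas_of_mem_sectionPieces heX heY heZ hcov
  have hinj : Set.InjOn (fun i => (e i).2.2) E' :=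
    injOn_snd_snd_of_covers hXZ hYZ heX heY (fun z hz => hcov z (by simp [hz])) (hE'.trans hZ.symm)
  have hlen : L.length = Fintype.card (DMPlayer X Y Z e) := by
    have hcard := card_dmPlayer_add_card_add_card hXY hXZ hYZ heX heY heZ hmult
    have hE'M := E'.card_le_univ
    rw [Fintype.card_fin] at hE'M
    rw [length_flatten_sectionPieces]
    omega
  obtain ⟨c, σ, hc, hc0, hcM, hpiece⟩ :=
    exists_division_of_tiles htiles hle (nodup_flatten_sectionPieces heX heY heZ hcov hinj) hlen
  refine ⟨c, σ, hc, hc0, hcM, fun p => ?_⟩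
  obtain ⟨q, hq, rfl, hl, hr⟩ := hpiece p
  rw [hl, hr]
  exact hfair q hq

/-- completeness of the 3DM reduction, Theorem 2: if the 3DM
instance has a perfect matching `E' ⊆ E`, `|E'| = n'`, covering `X ∪ Y ∪ Z`,
then the constructed cake instance admits a connected division in which every
player's utility is at least `1/M`. -/
theorem stmt_1 {α : Type*} [DecidableEq α] (X Y Z : Finset α) (n' M : ℕ)
    (hM : 1 ≤ M) (hX : X.card = n') (hY : Y.card = n') (hZ : Z.card = n')
    (hXY : Disjoint X Y) (hXZ : Disjoint X Z) (hYZ : Disjoint Y Z)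
    (e : Fin M → α × α × α) (he : Function.Injective e)
    (heX : ∀ i, (e i).1 ∈ X) (heY : ∀ i, (e i).2.1 ∈ Y) (heZ : ∀ i, (e i).2.2 ∈ Z)
    (hmult : ∀ w ∈ X ∪ Y ∪ Z, 1 ≤ mult e w)
    (hcover : ∃ E' : Finset (Fin M), E'.card = n' ∧
      ∀ w ∈ X ∪ Y ∪ Z, ∃ i ∈ E', w ∈ coords (e i)) :
    ∃ (c : Fin (Fintype.card (DMPlayer X Y Z e) + 1) → ℝ)
      (σ : Fin (Fintype.card (DMPlayer X Y Z e)) ≃ DMPlayer X Y Z e),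
      Monotone c ∧ c 0 = 0 ∧ c (Fin.last _) = 2 * M ∧
      ∀ p : DMPlayer X Y Z e,
        ((M : ℝ≥0∞))⁻¹ ≤
          dmMeas X Y Z e p (Ioo (c (σ.symm p).castSucc) (c (σ.symm p).succ)) :=
  stmt_1_general X Y Z n' M hX hY hZ hXY hXZ hYZ e heX heY heZ hmult hcover
end

section
/- For 1 ≤ j ≤ m, S ⊆ {1, …, n} nonempty, and k ∈ {1, …, n}, define U(j,S,k) ∈ ℝ ∪ {−∞} as the maximum, over all partitions of the items 1, …, j into |S| nonempty consecutive blocks assigned bijectively to the players of S with player k receiving the last block (the one containing item j), of Σ_{i∈S} (total value of i's block to player i); set U(j,S,k) = −∞ if k ∉ S or |S| > j. Then U(1,S,k) = v_k(1) if S = {k} and U(1,S,k) = −∞ otherwise; and for every 1 ≤ j < m, every nonempty S ⊆ {1, …, n}, and every k ∈ S: U(j+1, S, k) = max( U(j, S, k) + v_k(j+1), max_{i ∈ S∖{k}} U(j, S∖{k}, i) + v_k(j+1) ), where a maximum over the empty set is −∞. (Correctness of the dynamic-programming recurrence in the FPT-FPTAS for utilitarian welfare, Theorem 4.) -/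
/-- `dpU n v j S k` is the maximum (as an extended real, `⊥` if no such partition
exists) over all partitions of the items `1, …, j` into `S.card` nonempty
consecutive blocks assigned bijectively to the players of `S`, with player `k`
receiving the last block, of the total utilitarian welfare. -/
noncomputable def dpU (n : ℕ) (v : Fin n → ℕ → ℝ) (j : ℕ) (S : Finset (Fin n))
    (k : Fin n) : EReal :=
  sSup {w : EReal |
    ∃ (hS : 0 < S.card) (c : Fin (S.card + 1) → ℕ) (σ : Fin S.card ≃ {i // i ∈ S}),
      StrictMono c ∧ c 0 = 0 ∧ c (Fin.last S.card) = j ∧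
      ((σ ⟨S.card - 1, Nat.sub_lt hS one_pos⟩ : {i // i ∈ S}) : Fin n) = k ∧
      w = ((∑ b : Fin S.card,
        ∑ a ∈ Finset.Icc (c b.castSucc + 1) (c b.succ), v (σ b) a : ℝ) : EReal)}

/-!
Cut a connected division of the items `1, …, j + 1` just before item `j + 1`. If the last
block, owned by `k`, contains more than item `j + 1`, removing that item leaves a division of
`1, …, j` among the same players, still ending with `k`; otherwise the last block is `{j + 1}`
and removing it leaves a division of `1, …, j` among `S ∖ {k}`, ending with some `i ≠ k`. Both
operations are reversible and change the welfare by exactly `v k (j + 1)`, so the set of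
attainable welfares at `j + 1` is the translate of the union of the sets at `j`; taking suprema
in `EReal` (where translation by a real number is an order isomorphism) gives the recurrence.
-/

open Finset

namespace Fin

theorem strictMono_snoc_iff {α : Type*} [Preorder α] {N : ℕ} {c : Fin (N + 1) → α} {x : α} :
    StrictMono (snoc c x : Fin (N + 2) → α) ↔ StrictMono c ∧ c (last N) < x := by
  simp only [strictMono_iff_lt_succ, forall_fin_succ', snoc_castSucc, succ_castSucc, succ_last,
    snoc_last]

end Fin

section

variable {n : ℕ} (v : Fin n → ℕ → ℝ)

-- Block `b` is the item interval `(c b.castSucc, c b.succ]`, given to player `p b`.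
def blockWelfare {N : ℕ} (c : Fin (N + 1) → ℕ) (p : Fin N → Fin n) : ℝ :=
  ∑ b, ∑ a ∈ Icc (c b.castSucc + 1) (c b.succ), v (p b) a

theorem blockWelfare_snoc {N : ℕ} (c : Fin (N + 1) → ℕ) (p : Fin N → Fin n) (x : ℕ)
    (i : Fin n) :
    blockWelfare v (Fin.snoc c x : Fin (N + 2) → ℕ) (Fin.snoc p i) =
      blockWelfare v c p + ∑ a ∈ Icc (c (Fin.last N) + 1) x, v i a := by
  simp [blockWelfare, Fin.sum_univ_castSucc, Fin.succ_castSucc, -Fin.castSucc_succ]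

theorem blockWelfare_eq_init_add {N : ℕ} (c : Fin (N + 2) → ℕ) (p : Fin (N + 1) → Fin n) :
    blockWelfare v c p = blockWelfare v (Fin.init c) (Fin.init p) +
      ∑ a ∈ Icc (c (Fin.last N).castSucc + 1) (c (Fin.last _)), v (p (Fin.last N)) a := by
  conv_lhs => rw [← Fin.snoc_init_self c, ← Fin.snoc_init_self p]
  exact blockWelfare_snoc ..

theorem blockWelfare_snoc_init_add_one {N : ℕ} (c : Fin (N + 2) → ℕ) (p : Fin (N + 1) → Fin n)
    {x : ℕ} (hx : c (Fin.last N).castSucc ≤ x) :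
    blockWelfare v (Fin.snoc (Fin.init c) (x + 1) : Fin (N + 2) → ℕ) p =
      blockWelfare v (Fin.snoc (Fin.init c) x : Fin (N + 2) → ℕ) p +
        v (p (Fin.last N)) (x + 1) := by
  rw [← Fin.snoc_init_self p, blockWelfare_snoc, blockWelfare_snoc,
    sum_Icc_succ_top (by simpa [Fin.init] using hx), Fin.snoc_last]
  ring

-- The block count is a free `N + 1` rather than `S.card` as in `dpU`, so that adding or
-- removing a block is `Fin.snoc` / `Fin.init` with no cast along `S.card = N + 1`.
structure IsConnectedDivision (j : ℕ) (S : Finset (Fin n)) (k : Fin n) {N : ℕ}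
    (c : Fin (N + 2) → ℕ) (p : Fin (N + 1) → Fin n) : Prop where
  strictMono : StrictMono c
  map_zero : c 0 = 0
  map_last : c (Fin.last _) = j
  injective : p.Injective
  image_eq : univ.image p = S
  last_player : p (Fin.last N) = k

namespace IsConnectedDivision

variable {v} {j j' : ℕ} {S : Finset (Fin n)} {i k : Fin n} {N : ℕ}

theorem snoc_init {c : Fin (N + 2) → ℕ} {p : Fin (N + 1) → Fin n}
    (h : IsConnectedDivision j S k c p) (hj' : c (Fin.last N).castSucc < j') :
    IsConnectedDivision j' S k (Fin.snoc (Fin.init c) j' : Fin (N + 2) → ℕ) p where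
  strictMono := Fin.strictMono_snoc_iff.2 ⟨h.strictMono.comp Fin.strictMono_castSucc, hj'⟩
  map_zero := by simpa [Fin.init] using h.map_zero
  map_last := Fin.snoc_last ..
  injective := h.injective
  image_eq := h.image_eq
  last_player := h.last_player

theorem snoc {c : Fin (N + 2) → ℕ} {p : Fin (N + 1) → Fin n}
    (h : IsConnectedDivision j S i c p) (hk : k ∉ S) (hj' : j < j') :
    IsConnectedDivision j' (insert k S) k (Fin.snoc c j' : Fin (N + 3) → ℕ)
      (Fin.snoc p k : Fin (N + 2) → Fin n) where
  strictMono := Fin.strictMono_snoc_iff.2 ⟨h.strictMono, h.map_last ▸ hj'⟩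
  map_zero := by simpa using h.map_zero
  map_last := Fin.snoc_last ..
  injective := Fin.snoc_injective_of_injective h.injective (by simpa [← h.image_eq] using hk)
  image_eq := by
    ext x
    simp [← h.image_eq, Fin.exists_fin_succ', or_comm, eq_comm]
  last_player := Fin.snoc_last ..

theorem init {c : Fin (N + 3) → ℕ} {p : Fin (N + 2) → Fin n}
    (h : IsConnectedDivision j S k c p) :
    IsConnectedDivision (c (Fin.last _).castSucc) (S.erase k) (p (Fin.last N).castSucc)
      (Fin.init c) (Fin.init p) where
  strictMono := h.strictMono.comp Fin.strictMono_castSucc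
  map_zero := h.map_zero
  map_last := rfl
  injective := h.injective.comp (Fin.castSucc_injective _)
  image_eq := by
    ext x
    simp only [← h.image_eq, ← h.last_player, mem_erase, mem_image, mem_univ, true_and, Fin.init]
    constructor
    · rintro ⟨a, rfl⟩
      exact ⟨fun hp => (Fin.castSucc_lt_last a).ne (h.injective hp), _, rfl⟩
    · rintro ⟨hx, a, rfl⟩
      obtain ⟨a, rfl⟩ := Fin.exists_castSucc_eq.2 (ne_of_apply_ne p hx)
      exact ⟨a, rfl⟩
  last_player := rfl

theorem exists_equiv {c : Fin (N + 2) → ℕ} {p : Fin (N + 1) → Fin n}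
    (h : IsConnectedDivision j S k c p) :
    ∃ (hS : 0 < S.card) (c' : Fin (S.card + 1) → ℕ) (σ : Fin S.card ≃ {i // i ∈ S}),
      StrictMono c' ∧ c' 0 = 0 ∧ c' (Fin.last S.card) = j ∧
      (σ ⟨S.card - 1, Nat.sub_lt hS one_pos⟩ : Fin n) = k ∧
      blockWelfare v c' (fun b => σ b) = blockWelfare v c p := by
  have hcard : S.card = N + 1 := by
    rw [← h.image_eq, card_image_of_injective _ h.injective, card_univ, Fintype.card_fin]
  have hmem (b : Fin (N + 1)) : p b ∈ S := by
    rw [← h.image_eq]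
    exact mem_image_of_mem p (mem_univ b)
  have hbij : Function.Bijective fun b => (⟨p b, hmem b⟩ : {i // i ∈ S}) := by
    refine ⟨fun a b hab => h.injective (congrArg Subtype.val hab), fun i => ?_⟩
    obtain ⟨b, -, hb⟩ := mem_image.1 (show (i : Fin n) ∈ univ.image p from h.image_eq ▸ i.2)
    exact ⟨b, Subtype.ext hb⟩
  rw [hcard]
  exact ⟨N.succ_pos, c, Equiv.ofBijective _ hbij, h.strictMono, h.map_zero, h.map_last,
    h.last_player, rfl⟩

end IsConnectedDivision

def divisionWelfares (j : ℕ) (S : Finset (Fin n)) (k : Fin n) : Set ℝ :=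
  {w | ∃ (N : ℕ) (c : Fin (N + 2) → ℕ) (p : Fin (N + 1) → Fin n),
    IsConnectedDivision j S k c p ∧ blockWelfare v c p = w}

variable {v}

theorem blockWelfare_mem_divisionWelfares_of_equiv {j : ℕ} {S : Finset (Fin n)} {k : Fin n}
    {M : ℕ} (hM : 0 < M) {c : Fin (M + 1) → ℕ} (σ : Fin M ≃ {i // i ∈ S}) (hc : StrictMono c)
    (h0 : c 0 = 0) (hj : c (Fin.last M) = j)
    (hk : (σ ⟨M - 1, Nat.sub_lt hM one_pos⟩ : Fin n) = k) :
    blockWelfare v c (fun b => σ b) ∈ divisionWelfares v j S k := by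
  obtain ⟨N, rfl⟩ := Nat.exists_eq_add_one_of_ne_zero hM.ne'
  refine ⟨N, c, _, ⟨hc, h0, hj, Subtype.val_injective.comp σ.injective, ?_, hk⟩, rfl⟩
  ext i
  simp only [mem_image, mem_univ, true_and]
  exact ⟨fun ⟨b, hb⟩ => hb ▸ (σ b).2, fun hi => ⟨σ.symm ⟨i, hi⟩, by simp⟩⟩

theorem divisionWelfares_one (S : Finset (Fin n)) (k : Fin n) :
    divisionWelfares v 1 S k = if S = {k} then {v k 1} else ∅ := by
  ext w
  constructor
  · rintro ⟨N, c, p, h, rfl⟩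
    obtain rfl : N = 0 := by
      by_contra hN
      obtain ⟨N, rfl⟩ := Nat.exists_eq_add_one_of_ne_zero hN
      have h01 := h.strictMono (show (0 : Fin (N + 3)) < 1 by simp)
      have h1l := h.strictMono Fin.one_lt_last
      rw [h.map_zero] at h01
      rw [h.map_last] at h1l
      omega
    have hS : S = {k} := by rw [← h.image_eq, ← h.last_player]; rfl
    have hw : blockWelfare v c p = v k 1 := by
      have h1 : c 1 = 1 := h.map_last
      simp [blockWelfare, ← h.last_player, h.map_zero, h1]
    simp [hS, hw]
  · split_ifs with hS
    · rintro rfl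
      refine ⟨0, fun i => i, fun _ => k, ⟨fun _ _ hab => hab, rfl, rfl, ?_, ?_, rfl⟩, ?_⟩
      · exact fun a b _ => Subsingleton.elim (α := Fin 1) a b
      · simp [hS]
      · simp [blockWelfare]
    · exact False.elim

theorem divisionWelfares_succ {j : ℕ} (hj : 1 ≤ j) {S : Finset (Fin n)} {k : Fin n}
    (hk : k ∈ S) :
    divisionWelfares v (j + 1) S k = (· + v k (j + 1)) ''
      (divisionWelfares v j S k ∪ ⋃ i ∈ S.erase k, divisionWelfares v j (S.erase k) i) := by
  ext w
  constructor
  · rintro ⟨N, c, p, h, rfl⟩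
    have hprev : c (Fin.last N).castSucc < j + 1 :=
      h.map_last ▸ h.strictMono (Fin.castSucc_lt_last _)
    rcases Nat.lt_succ_iff_lt_or_eq.1 hprev with hlt | heq
    · refine ⟨_, Or.inl ⟨N, _, p, h.snoc_init hlt, rfl⟩, ?_⟩
      dsimp only
      rw [← h.last_player, ← blockWelfare_snoc_init_add_one v c p hlt.le, ← h.map_last,
        Fin.snoc_init_self]
    · obtain ⟨N, rfl⟩ : ∃ N', N = N' + 1 := by
        refine Nat.exists_eq_add_one_of_ne_zero fun hN => ?_
        subst hN
        rw [show (Fin.last 0).castSucc = 0 from rfl, h.map_zero] at heq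
        omega
      have hi : p (Fin.last N).castSucc ∈ S.erase k := by
        rw [← h.init.image_eq]
        exact mem_image_of_mem _ (mem_univ _)
      refine ⟨_, Or.inr (Set.mem_iUnion₂.2 ⟨_, hi, N, _, _, heq ▸ h.init, rfl⟩), ?_⟩
      rw [blockWelfare_eq_init_add v c, heq, h.map_last, h.last_player, Icc_self, sum_singleton]
  · rintro ⟨_, ⟨N, c, p, h, rfl⟩ | hw, rfl⟩
    · have hprev : c (Fin.last N).castSucc < j :=
        h.map_last ▸ h.strictMono (Fin.castSucc_lt_last _)
      refine ⟨N, _, p, h.snoc_init (Nat.lt_succ_of_lt hprev), ?_⟩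
      rw [blockWelfare_snoc_init_add_one v c p hprev.le, ← h.map_last, Fin.snoc_init_self,
        h.last_player]
    · obtain ⟨i, hi, N, c, p, h, rfl⟩ := Set.mem_iUnion₂.1 hw
      refine ⟨N + 1, _, _, insert_erase hk ▸ h.snoc (S.notMem_erase k) (Nat.lt_succ_self j), ?_⟩
      rw [blockWelfare_snoc, h.map_last, Icc_self, sum_singleton]

end

theorem dpU_eq_sSup_divisionWelfares {n : ℕ} (v : Fin n → ℕ → ℝ) (j : ℕ) (S : Finset (Fin n))
    (k : Fin n) : dpU n v j S k = sSup (((↑) : ℝ → EReal) '' divisionWelfares v j S k) := by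
  refine congrArg sSup (Set.ext fun w => ⟨?_, ?_⟩)
  · rintro ⟨hS, c, σ, hc, h0, hj, hk, rfl⟩
    exact ⟨_, blockWelfare_mem_divisionWelfares_of_equiv hS σ hc h0 hj hk, rfl⟩
  · rintro ⟨_, ⟨N, c, p, h, rfl⟩, rfl⟩
    obtain ⟨hS, c', σ, hc, h0, hj, hk, hw⟩ := h.exists_equiv
    exact ⟨hS, c', σ, hc, h0, hj, hk, by rw [← hw]; rfl⟩

noncomputable def EReal.addCoeOrderIso (x : ℝ) : EReal ≃o EReal where
  toFun a := a + x
  invFun a := a - x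
  left_inv _ := EReal.add_sub_cancel_right
  right_inv _ := EReal.sub_add_cancel
  map_rel_iff' := (EReal.addLECancellable_coe x).add_le_add_iff_right

theorem EReal.sSup_image_coe_add (A : Set ℝ) (x : ℝ) :
    sSup (((↑) : ℝ → EReal) '' ((· + x) '' A)) = sSup (((↑) : ℝ → EReal) '' A) + x := by
  rw [Set.image_comm (g' := EReal.addCoeOrderIso x) (f' := (↑)) fun a => EReal.coe_add a x]
  exact (((EReal.addCoeOrderIso x).map_sSup _).trans sSup_image.symm).symm

theorem stmt_5_general (n m : ℕ)
    (v : Fin n → ℕ → ℝ) :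
    (∀ (S : Finset (Fin n)) (k : Fin n), S.Nonempty →
      dpU n v 1 S k = if S = {k} then ((v k 1 : ℝ) : EReal) else ⊥) ∧
    (∀ j : ℕ, 1 ≤ j → j < m → ∀ (S : Finset (Fin n)) (k : Fin n),
      S.Nonempty → k ∈ S →
      dpU n v (j + 1) S k =
        max (dpU n v j S k + ((v k (j + 1) : ℝ) : EReal))
          (((S.erase k).sup fun i => dpU n v j (S.erase k) i) +
            ((v k (j + 1) : ℝ) : EReal))) := by
  refine ⟨fun S k _ => ?_, fun j hj _ S k _ hk => ?_⟩
  · rw [dpU_eq_sSup_divisionWelfares, divisionWelfares_one]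
    split_ifs <;> simp
  · simp only [dpU_eq_sSup_divisionWelfares]
    rw [divisionWelfares_succ hj hk, EReal.sSup_image_coe_add, Set.image_union, sSup_union,
      max_add_add_right, Set.image_iUnion₂, sSup_iUnion]
    simp only [sSup_iUnion, Finset.sup_eq_iSup]

/-- correctness of the dynamic-programming recurrence behind the
FPT-FPTAS for utilitarian welfare (Theorem 4). -/
theorem stmt_5 (n m : ℕ) (hn : 1 ≤ n) (hm : 1 ≤ m)
    (v : Fin n → ℕ → ℝ) (hv : ∀ i j, 0 ≤ v i j) :
    (∀ (S : Finset (Fin n)) (k : Fin n), S.Nonempty →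
      dpU n v 1 S k = if S = {k} then ((v k 1 : ℝ) : EReal) else ⊥) ∧
    (∀ j : ℕ, 1 ≤ j → j < m → ∀ (S : Finset (Fin n)) (k : Fin n),
      S.Nonempty → k ∈ S →
      dpU n v (j + 1) S k =
        max (dpU n v j S k + ((v k (j + 1) : ℝ) : EReal))
          (((S.erase k).sup fun i => dpU n v j (S.erase k) i) +
            ((v k (j + 1) : ℝ) : EReal))) :=
  stmt_5_general n m v
end

section
/- For every ε > 0 there exist points 0 = c_0 < c_1 < ⋯ < c_m = 1 with m ≤ n/ε + 1 such that v_i((c_{j−1}, c_j)) ≤ ε for every player i ∈ {1, …, n} and every 1 ≤ j ≤ m. (Existence and size guarantee of the discretization produced by Algorithm 1, Lemma 1(1).) -/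
/-!
Let `F` be the sum of the players' distribution functions: it is continuous (the measures are
atomless), monotone, and increases by at most `n` on `[0, 1]`. With `m = ⌊n/ε⌋ + 1` we have
`n < m ε`, so adding a small linear term `η x` makes `F` strictly monotone while its increase on
`[0, 1]` becomes exactly `m ε`. Cutting `[0, 1]` at the preimages of `0, ε, …, m ε` under this
perturbed function gives intervals on which `F`, hence every single distribution function,
increases by at most `ε`.
-/

open MeasureTheory Set ProbabilityTheory

namespace StieltjesFunction

lemma continuousAt_of_measure_singleton_eq_zero (f : StieltjesFunction ℝ) {x : ℝ}
    (h : f.measure {x} = 0) : ContinuousAt f x := by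
  rw [f.mono.continuousAt_iff_leftLim_eq_rightLim, f.rightLim_eq]
  rw [measure_singleton, ENNReal.ofReal_eq_zero, sub_nonpos] at h
  exact le_antisymm (f.mono.leftLim_le le_rfl) h

lemma continuous_of_nullSingletonClass (f : StieltjesFunction ℝ) [NullSingletonClass f.measure] :
    Continuous f :=
  continuous_iff_continuousAt.2 fun x =>
    f.continuousAt_of_measure_singleton_eq_zero (MeasureTheory.measure_singleton x)

end StieltjesFunction

namespace ProbabilityTheory

variable (μ : Measure ℝ) [IsProbabilityMeasure μ]

lemma continuous_cdf [NullSingletonClass μ] : Continuous (cdf μ) := by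
  have : NullSingletonClass (cdf μ).measure := by rw [measure_cdf]; infer_instance
  exact (cdf μ).continuous_of_nullSingletonClass

lemma measure_Ioo_le_ofReal_cdf_sub (a b : ℝ) :
    μ (Ioo a b) ≤ ENNReal.ofReal (cdf μ b - cdf μ a) :=
  calc μ (Ioo a b) ≤ μ (Ioc a b) := measure_mono Ioo_subset_Ioc_self
    _ = ENNReal.ofReal (cdf μ b - cdf μ a) := by rw [← (cdf μ).measure_Ioc, measure_cdf]

end ProbabilityTheory

lemma StrictMono.exists_comp_eq_of_monotone {G : ℝ → ℝ} (hGm : StrictMono G)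
    (hGc : Continuous G) {a b : ℝ} {m : ℕ} {y : Fin (m + 1) → ℝ} (hy : Monotone y)
    (hy0 : y 0 = G a) (hym : y (Fin.last m) = G b) :
    ∃ c : Fin (m + 1) → ℝ, G ∘ c = y ∧ c 0 = a ∧ c (Fin.last m) = b := by
  have hab : a ≤ b := hGm.le_iff_le.1 (hy0 ▸ hym ▸ hy (Fin.zero_le _))
  have hmem : ∀ j, y j ∈ range G := fun j => image_subset_range _ _ <|
    intermediate_value_Icc hab hGc.continuousOn
      ⟨hy0 ▸ hy (Fin.zero_le j), hym ▸ hy (Fin.le_last j)⟩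
  choose c hc using hmem
  exact ⟨c, funext hc, hGm.injective (by rw [hc, hy0]), hGm.injective (by rw [hc, hym])⟩

lemma Monotone.exists_partition_sub_le {F : ℝ → ℝ} (hFm : Monotone F) (hFc : Continuous F)
    {a b ε : ℝ} (hab : a < b) {m : ℕ} (hm : F b - F a < m * ε) :
    ∃ c : Fin (m + 1) → ℝ, StrictMono c ∧ c 0 = a ∧ c (Fin.last m) = b ∧
      ∀ j : Fin m, F (c j.succ) - F (c j.castSucc) ≤ ε := by
  have hFab : F a ≤ F b := hFm hab.le
  have hε : 0 < ε := pos_of_mul_pos_right (by linarith : (0 : ℝ) < m * ε) m.cast_nonneg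
  -- the slope that makes the perturbed function increase by exactly `m ε` on `[a, b]`
  set η := (m * ε - (F b - F a)) / (b - a) with hη_def
  have hη : 0 < η := div_pos (by linarith) (by linarith)
  set G : ℝ → ℝ := fun x => F x + η * x with hG_def
  have hGm : StrictMono G := hFm.add_strictMono (strictMono_mul_left_of_pos hη)
  have hGc : Continuous G := by fun_prop
  have hGab : G b = G a + m * ε := by
    simp only [hG_def, hη_def]
    field_simp [(sub_pos.2 hab).ne']
    ring
  have hy : StrictMono fun j : Fin (m + 1) => G a + j * ε := fun i j hij => by
    have : (i : ℝ) < j := by exact_mod_cast hij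
    dsimp only
    gcongr
  obtain ⟨c, hcy, hc0, hcm⟩ :=
    hGm.exists_comp_eq_of_monotone hGc (a := a) (b := b) hy.monotone (by simp)
      (by rw [hGab, Fin.val_last])
  have hG_c : ∀ j, G (c j) = G a + j * ε := fun j => congrFun hcy j
  have hc : StrictMono c := fun i j hij => hGm.lt_iff_lt.1 (by rw [hG_c, hG_c]; exact hy hij)
  refine ⟨c, hc, hc0, hcm, fun j => ?_⟩
  have hstep := congrArg₂ (· - ·) (hG_c j.succ) (hG_c j.castSucc)
  have hlt := mul_pos hη (sub_pos.2 (hc (Fin.castSucc_lt_succ : j.castSucc < j.succ)))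
  simp only [hG_def, Fin.val_succ, Fin.val_castSucc, Nat.cast_add, Nat.cast_one] at hstep
  nlinarith

theorem stmt_8_general (n : ℕ) (v : Fin n → Measure ℝ)
    (hatomless : ∀ i, NoAtoms (v i))
    (hprob : ∀ i, v i (Icc 0 1) = 1) (hsupp : ∀ i, v i (Icc (0 : ℝ) 1)ᶜ = 0)
    (ε : ℝ) (hε : 0 < ε) :
    ∃ (m : ℕ) (c : Fin (m + 1) → ℝ),
      StrictMono c ∧ c 0 = 0 ∧ c (Fin.last m) = 1 ∧ (m : ℝ) ≤ n / ε + 1 ∧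
      ∀ (i : Fin n) (j : Fin m),
        v i (Ioo (c j.castSucc) (c j.succ)) ≤ ENNReal.ofReal ε := by
  have : ∀ i, NullSingletonClass (v i) := hatomless
  have : ∀ i, IsProbabilityMeasure (v i) := fun i =>
    ⟨by rw [← measure_add_measure_compl measurableSet_Icc, hprob i, hsupp i, add_zero]⟩
  set F : ℝ → ℝ := fun x => ∑ i, cdf (v i) x with hF_def
  have hFm : Monotone F := fun x y hxy => Finset.sum_le_sum fun i _ => monotone_cdf _ hxy
  have hFc : Continuous F := continuous_finsetSum _ fun i _ => continuous_cdf (v i)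
  have hF_sub : ∀ x y, F y - F x = ∑ i, (cdf (v i) y - cdf (v i) x) := fun x y =>
    (Finset.sum_sub_distrib _ _).symm
  have hF01 : F 1 - F 0 ≤ n := by
    rw [hF_sub]
    simpa using Finset.sum_le_sum fun i (_ : i ∈ Finset.univ) =>
      (sub_le_self _ (cdf_nonneg (v i) 0)).trans (cdf_le_one (v i) 1)
  have hnm : (n : ℝ) < (⌊n / ε⌋₊ + 1 : ℕ) * ε := by
    rw [← div_lt_iff₀ hε]
    exact_mod_cast Nat.lt_floor_add_one _
  obtain ⟨c, hc, hc0, hcm, hcε⟩ := hFm.exists_partition_sub_le hFc one_pos (hF01.trans_lt hnm)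
  refine ⟨_, c, hc, hc0, hcm, ?_, fun i j => ?_⟩
  · push_cast
    gcongr
    exact Nat.floor_le (by positivity)
  have hcj := (hc (Fin.castSucc_lt_succ : j.castSucc < j.succ)).le
  calc v i (Ioo (c j.castSucc) (c j.succ))
      ≤ ENNReal.ofReal (cdf (v i) (c j.succ) - cdf (v i) (c j.castSucc)) :=
        measure_Ioo_le_ofReal_cdf_sub _ _ _
    _ ≤ ENNReal.ofReal (F (c j.succ) - F (c j.castSucc)) := by
        rw [hF_sub]
        exact ENNReal.ofReal_le_ofReal <| Finset.single_le_sum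
          (fun k _ => sub_nonneg.2 (monotone_cdf (v k) hcj)) (Finset.mem_univ i)
    _ ≤ ENNReal.ofReal ε := ENNReal.ofReal_le_ofReal (hcε j)

/-- the discretization of Algorithm 1 exists (Lemma 1(1)):
for every `ε > 0` there are points `0 = c_0 < c_1 < ⋯ < c_m = 1` with
`m ≤ n/ε + 1` such that every player values every resulting interval at
most `ε`. -/
theorem stmt_8 (n : ℕ) (hn : 0 < n) (v : Fin n → Measure ℝ)
    (hatomless : ∀ i, NoAtoms (v i))
    (hprob : ∀ i, v i (Icc 0 1) = 1) (hsupp : ∀ i, v i (Icc (0 : ℝ) 1)ᶜ = 0)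
    (ε : ℝ) (hε : 0 < ε) :
    ∃ (m : ℕ) (c : Fin (m + 1) → ℝ),
      StrictMono c ∧ c 0 = 0 ∧ c (Fin.last m) = 1 ∧ (m : ℝ) ≤ n / ε + 1 ∧
      ∀ (i : Fin n) (j : Fin m),
        v i (Ioo (c j.castSucc) (c j.succ)) ≤ ENNReal.ofReal ε :=
  stmt_8_general n v hatomless hprob hsupp ε hε
end

section
/- Let ε > 0 and let 0 = c_0 < c_1 < ⋯ < c_m = 1 be points such that for every 1 ≤ j ≤ m − 1 there exists a player i with v_i((c_{j−1}, c_j)) ≥ ε. Then m ≤ n/ε + 1. (Bound on the number of iterations of the discretization procedure, Lemma 1(1).) -/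
/-!
Double counting: the inner intervals `(c_{j-1}, c_j)`, `j < m`, are disjoint, so each player
values all of them together at most `1`, while each of the `m - 1` intervals contributes at least
`ε` to the sum over the `n` players. Hence `(m - 1) ε ≤ n`.
-/

open MeasureTheory Set Function
open scoped ENNReal

theorem Monotone.pairwise_disjoint_on_Ioo_castSucc_succ {β : Type*} [Preorder β] {m : ℕ}
    {c : Fin (m + 1) → β} (hc : Monotone c) :
    Pairwise (Disjoint on fun j : Fin m => Ioo (c j.castSucc) (c j.succ)) :=
  (pairwise_disjoint_on _).2 fun _ _ hjk =>
    disjoint_iff_inf_le.mpr fun _ ⟨⟨_, hx₁⟩, ⟨hx₂, _⟩⟩ =>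
      hx₁.not_ge <| (hc (Fin.succ_le_castSucc_iff.mpr hjk)).trans hx₂.le

theorem Fin.card_filter_val_add_one_lt (m : ℕ) :
    (Finset.univ.filter fun j : Fin m => (j : ℕ) + 1 < m).card = m - 1 := by
  rw [Finset.filter_congr (q := fun j : Fin m => (j : ℕ) < m - 1) (fun j _ => by omega),
    Fin.card_filter_val_lt]
  omega

theorem measure_univ_le_one_of_compl {α : Type*} [MeasurableSpace α] {μ : Measure α}
    {s : Set α} (hs : μ s = 1) (hsc : μ sᶜ = 0) : μ univ ≤ 1 := by
  simpa [hs, hsc] using measure_univ_le_add_compl (μ := μ) s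

theorem card_mul_le_card_of_pairwiseDisjoint {α ι κ : Type*} [MeasurableSpace α] [Fintype ι]
    {μ : ι → Measure α} (hμ : ∀ i, μ i univ ≤ 1) {s : κ → Set α}
    (hs : ∀ j, MeasurableSet (s j)) (hdisj : Pairwise (Disjoint on s)) {S : Finset κ} {ε : ℝ}
    (hε : ∀ j ∈ S, ∃ i, ENNReal.ofReal ε ≤ μ i (s j)) :
    (S.card : ℝ) * ε ≤ Fintype.card ι := by
  have hsum : ENNReal.ofReal (S.card * ε) ≤ ENNReal.ofReal (Fintype.card ι) :=
    calc ENNReal.ofReal (S.card * ε) = ∑ _j ∈ S, ENNReal.ofReal ε := by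
          rw [ENNReal.ofReal_mul (Nat.cast_nonneg _), ENNReal.ofReal_natCast, Finset.sum_const,
            nsmul_eq_mul]
      _ ≤ ∑ j ∈ S, ∑ i, μ i (s j) := Finset.sum_le_sum fun j hj => by
          obtain ⟨i, hi⟩ := hε j hj
          exact hi.trans (Finset.single_le_sum (f := fun i => μ i (s j)) (fun _ _ => zero_le)
            (Finset.mem_univ i))
      _ = ∑ i, ∑ j ∈ S, μ i (s j) := Finset.sum_comm
      _ ≤ ∑ _i : ι, 1 := Finset.sum_le_sum fun i _ =>
          (sum_measure_le_measure_univ (fun j _ => (hs j).nullMeasurableSet)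
            fun _ _ _ _ hjk => (hdisj hjk).aedisjoint).trans (hμ i)
      _ = ENNReal.ofReal (Fintype.card ι) := by simp
  exact (ENNReal.ofReal_le_ofReal_iff (Nat.cast_nonneg _)).1 hsum

theorem stmt_9_general (n m : ℕ) (v : Fin n → Measure ℝ)
    (hprob : ∀ i, v i (Icc 0 1) = 1) (hsupp : ∀ i, v i (Icc (0 : ℝ) 1)ᶜ = 0)
    (ε : ℝ) (hε : 0 < ε) (c : Fin (m + 1) → ℝ)
    (hc : StrictMono c)
    (h : ∀ j : Fin m, (j : ℕ) + 1 < m →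
      ∃ i, ENNReal.ofReal ε ≤ v i (Ioo (c j.castSucc) (c j.succ))) :
    (m : ℝ) ≤ n / ε + 1 := by
  have hbound := card_mul_le_card_of_pairwiseDisjoint
    (fun i => measure_univ_le_one_of_compl (hprob i) (hsupp i)) (fun _ => measurableSet_Ioo)
    hc.monotone.pairwise_disjoint_on_Ioo_castSucc_succ
    (S := Finset.univ.filter fun j : Fin m => (j : ℕ) + 1 < m)
    fun j hj => h j (Finset.mem_filter.1 hj).2
  rw [Fin.card_filter_val_add_one_lt, Fintype.card_fin, ← le_div_iff₀ hε] at hbound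
  calc (m : ℝ) ≤ ((m - 1 : ℕ) : ℝ) + 1 := by exact_mod_cast (by omega : m ≤ m - 1 + 1)
    _ ≤ n / ε + 1 := by linarith

/-- bound on the number of iterations of the discretization
procedure (Lemma 1(1)): if `0 = c_0 < ⋯ < c_m = 1` and each interval
`(c_{j-1}, c_j)` with `1 ≤ j ≤ m - 1` is worth at least `ε` to some player,
then `m ≤ n/ε + 1`. -/
theorem stmt_9 (n m : ℕ) (v : Fin n → Measure ℝ)
    (hatomless : ∀ i, NoAtoms (v i))
    (hprob : ∀ i, v i (Icc 0 1) = 1) (hsupp : ∀ i, v i (Icc (0 : ℝ) 1)ᶜ = 0)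
    (ε : ℝ) (hε : 0 < ε) (c : Fin (m + 1) → ℝ)
    (hc : StrictMono c) (h0 : c 0 = 0) (h1 : c (Fin.last m) = 1)
    (h : ∀ j : Fin m, (j : ℕ) + 1 < m →
      ∃ i, ENNReal.ofReal ε ≤ v i (Ioo (c j.castSucc) (c j.succ))) :
    (m : ℝ) ≤ n / ε + 1 :=
  stmt_9_general n m v hprob hsupp ε hε c hc h
end
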